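/- Let P = {x ∈ ℝ² : Ax ≤ b} be a convex polygon with nonempty interior, where every row A_i of A ∈ ℝ^{m×2} has unit norm and every row defines an edge of P, let n ≥ 2, let r = I(P), and for each i ∈ [m] let f_i(t) = width_{A_i}(interior_t(P)) − 2(n−1)t. Let ρ ∈ (0,r) be the unique number with width(P^ρ) = 2nρ. Then ρ = min { t ∈ (0,r) : f_i(t) = 0 for some i ∈ [m] }. -/

import Mathlib

open Metric Set
open scoped RealInnerProductSpace

/-- The directional width of a set `K` in direction `v`. -/
noncomputable def dirWidth (v : EuclideanSpace ℝ (Fin 2))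
    (K : Set (EuclideanSpace ℝ (Fin 2))) : ℝ :=
  sSup ((fun x => ⟪v, x⟫) '' K) - sInf ((fun x => ⟪v, x⟫) '' K)

/-- The width of `K`: the minimum directional width over all unit directions. -/
noncomputable def setWidth (K : Set (EuclideanSpace ℝ (Fin 2))) : ℝ :=
  sInf {w | ∃ v : EuclideanSpace ℝ (Fin 2), ‖v‖ = 1 ∧ w = dirWidth v K}

/-- The inner parallel body of `P` at distance `t`. -/
def innerParallel (P : Set (EuclideanSpace ℝ (Fin 2))) (t : ℝ) :
    Set (EuclideanSpace ℝ (Fin 2)) :=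
  {x ∈ P | closedBall x t ⊆ P}

/-- The `t`-rounded body `P^t`: the union of all closed `t`-balls contained in `P`. -/
def rounded (P : Set (EuclideanSpace ℝ (Fin 2))) (t : ℝ) :
    Set (EuclideanSpace ℝ (Fin 2)) :=
  {y | ∃ x, closedBall x t ⊆ P ∧ y ∈ closedBall x t}

/-- The inradius of `P`. -/
noncomputable def inradius (P : Set (EuclideanSpace ℝ (Fin 2))) : ℝ :=
  sSup {r : ℝ | ∃ x, closedBall x r ⊆ P}

/-! Writing `Q t = {x | ∀ j, ⟪A j, x⟫ ≤ b j - t}`, unit rows give `interior_t P = Q t` and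
`P^t = Q t + B(0, t)`, so every directional width of `P^ρ` is that of `Q ρ` plus `2ρ`, and
`width (Q ρ) = 2(n-1)ρ`. The width of a polygon is attained at an edge normal `± A i`: at a
minimising direction `v` whose two support sets are vertices `p` and `q`, these stay the support
points for all nearby directions `w`, so the width is locally the linear function `⟪w, p - q⟫`,
which has no local minimum with positive value on the circle. Hence `f_i(ρ) = 0` for some `i`;
and for `t < ρ` we have `Q ρ ⊆ Q t`, so `f_i(t) = 0` would give `2(n-1)ρ ≤ width (Q t) ≤ 2(n-1)t`.
-/

open Filter Topology Module
open scoped Pointwise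

section Polyhedron

variable {E : Type*} [NormedAddCommGroup E] [InnerProductSpace ℝ E] {ι : Type*}
  {A : ι → E} {c : ι → ℝ}

def polyhedron (A : ι → E) (c : ι → ℝ) : Set E := {x | ∀ j, ⟪A j, x⟫ ≤ c j}

lemma isClosed_polyhedron (A : ι → E) (c : ι → ℝ) : IsClosed (polyhedron A c) := by
  simp only [polyhedron, ofPred_forall]
  exact isClosed_iInter fun j => isClosed_le (by fun_prop) continuous_const

lemma convex_polyhedron (A : ι → E) (c : ι → ℝ) : Convex ℝ (polyhedron A c) := by
  simp only [polyhedron, ofPred_forall]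
  exact convex_iInter fun j => convex_halfSpace_le (innerₛₗ ℝ (A j)).isLinear (c j)

lemma closedBall_subset_polyhedron_iff (hA : ∀ j, ‖A j‖ = 1) {x : E} {t : ℝ} (ht : 0 ≤ t) :
    closedBall x t ⊆ polyhedron A c ↔ x ∈ polyhedron A (fun j => c j - t) := by
  refine ⟨fun h j => ?_, fun hx y hy j => ?_⟩
  · have hmem : x + t • A j ∈ closedBall x t := by
      simp [norm_smul, hA j, abs_of_nonneg ht]
    have := h hmem j
    rw [inner_add_right, real_inner_smul_right, real_inner_self_eq_norm_sq, hA j] at this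
    linarith
  · have hyx : ⟪A j, y - x⟫ ≤ t := calc
      ⟪A j, y - x⟫ ≤ ‖A j‖ * ‖y - x‖ := real_inner_le_norm _ _
      _ ≤ t := by rw [hA j, one_mul, ← dist_eq_norm]; exact hy
    have := hx j
    rw [inner_sub_right] at hyx
    linarith

variable [Finite ι]

lemma exists_pos_add_smul_mem_polyhedron {p d : E} (hp : p ∈ polyhedron A c)
    (hd : ∀ j, ⟪A j, p⟫ = c j → ⟪A j, d⟫ ≤ 0) : ∃ ε : ℝ, 0 < ε ∧ p + ε • d ∈ polyhedron A c := by
  have hslack : ∀ j, ∀ᶠ ε in 𝓝 (0 : ℝ), ⟪A j, p⟫ < c j → ⟪A j, p + ε • d⟫ < c j := by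
    intro j
    by_cases hj : ⟪A j, p⟫ < c j
    · have hcont : Continuous fun ε : ℝ => ⟪A j, p + ε • d⟫ := by fun_prop
      filter_upwards [hcont.continuousAt.eventually_lt continuousAt_const (by simpa using hj)]
        with ε hε _ using hε
    · exact .of_forall fun _ h => absurd h hj
  obtain ⟨ε, hε, hεslack⟩ := (eventually_all.2 hslack).exists_gt
  refine ⟨ε, hε, fun j => (hp j).lt_or_eq.elim (fun h => (hεslack j h).le) fun h => ?_⟩
  rw [inner_add_right, real_inner_smul_right, h]
  nlinarith [hd j h]

lemma exists_inner_eq_of_isMaxOn {v p : E} (hv : v ≠ 0) (hp : p ∈ polyhedron A c)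
    (hmax : IsMaxOn (⟪v, ·⟫) (polyhedron A c) p) : ∃ j, ⟪A j, p⟫ = c j := by
  by_contra! hfree
  obtain ⟨ε, hε, hmem⟩ :=
    exists_pos_add_smul_mem_polyhedron hp (d := v) fun j h => absurd h (hfree j)
  have := isMaxOn_iff.1 hmax _ hmem
  rw [inner_add_right, real_inner_smul_right] at this
  nlinarith [real_inner_self_pos.2 hv]

lemma eventually_isMaxOn_polyhedron [ProperSpace E] {v p : E} (hp : p ∈ polyhedron A c)
    (hmax : IsMaxOn (⟪v, ·⟫) (polyhedron A c) p)
    (huniq : ∀ x ∈ polyhedron A c, ⟪v, x⟫ = ⟪v, p⟫ → x = p) :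
    ∀ᶠ w in 𝓝 v, IsMaxOn (⟪w, ·⟫) (polyhedron A c) p := by
  -- `C` holds the unit directions of the tangent cone at `p`; `⟪v, ·⟫ < 0` on this compact set,
  -- hence so is `⟪w, ·⟫` for all `w` near `v`
  set C := sphere (0 : E) 1 ∩ ⋂ j ∈ {j | ⟪A j, p⟫ = c j}, {d | ⟪A j, d⟫ ≤ 0}
  have hC : IsCompact C := (isCompact_sphere 0 1).inter_right <|
    isClosed_biInter fun j _ => isClosed_le (by fun_prop) continuous_const
  have hneg : ∀ d ∈ C, ⟪v, d⟫ < 0 := by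
    rintro d ⟨hd1, hd⟩
    simp only [mem_iInter, mem_ofPred_eq] at hd
    obtain ⟨ε, hε, hmem⟩ := exists_pos_add_smul_mem_polyhedron hp hd
    have hle := isMaxOn_iff.1 hmax _ hmem
    rw [inner_add_right, real_inner_smul_right] at hle
    refine lt_of_le_of_ne (by nlinarith) fun h0 => ?_
    have := huniq _ hmem (by rw [inner_add_right, real_inner_smul_right, h0]; ring)
    simp [hε.ne'] at this
    simp [this] at hd1
  have hev : ∀ᶠ w in 𝓝 v, ∀ d ∈ C, ⟪w, d⟫ < 0 :=
    hC.eventually_forall_of_forall_eventually fun d hd =>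
      continuous_inner.continuousAt.eventually_lt continuousAt_const (hneg d hd)
  filter_upwards [hev] with w hw
  refine isMaxOn_iff.2 fun x hx => ?_
  rcases eq_or_ne x p with rfl | hxp
  · exact le_rfl
  have hxp' : x - p ≠ 0 := sub_ne_zero.2 hxp
  have hdir : ‖x - p‖⁻¹ • (x - p) ∈ C := by
    refine ⟨by simpa using norm_smul_inv_norm (𝕜 := ℝ) hxp', ?_⟩
    simp only [mem_iInter, mem_ofPred_eq]
    intro j hj
    rw [real_inner_smul_right, inner_sub_right, hj]
    exact mul_nonpos_of_nonneg_of_nonpos (by positivity) (by linarith [hx j])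
  have hlt := hw _ hdir
  rw [real_inner_smul_right] at hlt
  have := neg_of_mul_neg_right hlt (by positivity)
  rw [inner_sub_right] at this
  linarith

end Polyhedron

section Planar

variable {E : Type*} [NormedAddCommGroup E] [InnerProductSpace ℝ E] [Fact (finrank ℝ E = 2)]

lemma eq_or_eq_neg_of_inner_eq_zero {a b d : E} (ha : ‖a‖ = 1) (hb : ‖b‖ = 1) (hd : d ≠ 0)
    (had : ⟪d, a⟫ = 0) (hbd : ⟪d, b⟫ = 0) : a = b ∨ a = -b := by
  have hline : finrank ℝ (ℝ ∙ d)ᗮ = 1 := Submodule.finrank_orthogonal_span_singleton hd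
  have hb0 : (⟨b, Submodule.mem_orthogonal_singleton_iff_inner_right.2 hbd⟩ : (ℝ ∙ d)ᗮ) ≠ 0 := by
    simp [← norm_ne_zero_iff, hb]
  obtain ⟨s, hs⟩ := (finrank_eq_one_iff_of_nonzero' _ hb0).1 hline
    ⟨a, Submodule.mem_orthogonal_singleton_iff_inner_right.2 had⟩
  have hab : a = s • b := (congrArg Subtype.val hs).symm
  have hs1 : |s| = 1 := by simpa [hab, norm_smul, hb] using ha
  rcases abs_eq zero_le_one |>.1 hs1 with rfl | rfl <;> simp [hab]

lemma inner_nonpos_of_isLocalMinOn_sphere {a v : E} (hv : ‖v‖ = 1)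
    (hmin : IsLocalMinOn (⟪·, a⟫) (sphere 0 1) v) : ⟪v, a⟫ ≤ 0 := by
  have hline : finrank ℝ (ℝ ∙ v)ᗮ = 1 :=
    Submodule.finrank_orthogonal_span_singleton (by simp [← norm_ne_zero_iff, hv])
  obtain ⟨u₀, hu₀, hu₀0⟩ := Submodule.exists_mem_ne_zero_of_ne_bot (p := (ℝ ∙ v)ᗮ) fun h => by
    rw [h, finrank_bot] at hline
    exact zero_ne_one hline
  set u := ‖u₀‖⁻¹ • u₀
  have hu : ‖u‖ = 1 := norm_smul_inv_norm (𝕜 := ℝ) hu₀0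
  have hvu : ⟪v, u⟫ = 0 := by
    rw [real_inner_smul_right, Submodule.mem_orthogonal_singleton_iff_inner_right.1 hu₀, mul_zero]
  set γ : ℝ → E := fun θ => Real.cos θ • v + Real.sin θ • u
  have hγ : ∀ θ, γ θ ∈ sphere 0 1 := fun θ => by
    have : ‖γ θ‖ ^ 2 = 1 := by
      simp only [γ, norm_add_sq_real, norm_smul, real_inner_smul_left, real_inner_smul_right,
        hvu, hv, hu, Real.norm_eq_abs, mul_pow, sq_abs]
      simp [Real.cos_sq_add_sin_sq]
    simpa [pow_eq_one_iff_of_nonneg (norm_nonneg _)] using this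
  have hγv : Tendsto γ (𝓝 0) (𝓝[sphere 0 1] v) :=
    tendsto_nhdsWithin_iff.2 ⟨(by fun_prop : Continuous γ).tendsto' 0 v (by simp [γ]),
      .of_forall hγ⟩
  have hev : ∀ᶠ θ in 𝓝 0, ⟪v, a⟫ ≤ ⟪γ θ, a⟫ := hγv.eventually hmin
  have hev' : ∀ᶠ θ in 𝓝 0, ⟪v, a⟫ ≤ ⟪γ (-θ), a⟫ :=
    (continuous_neg.tendsto' (0 : ℝ) 0 neg_zero).eventually hev
  obtain ⟨θ, hθ, ⟨hpos, hneg⟩, hθ1⟩ := ((hev.and hev').and (Iio_mem_nhds one_pos)).exists_gt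
  have hsum : ⟪γ θ, a⟫ + ⟪γ (-θ), a⟫ = 2 * Real.cos θ * ⟪v, a⟫ := by
    simp only [γ, Real.cos_neg, Real.sin_neg, inner_add_left, real_inner_smul_left]
    ring
  have hcos : Real.cos θ < 1 := by
    simpa using Real.cos_lt_cos_of_nonneg_of_le_pi_div_two le_rfl
      (by linarith [Real.pi_gt_three, hθ1]) hθ
  nlinarith

lemma exists_eq_or_eq_neg_of_isMaxOn {ι : Type*} [Finite ι] {A : ι → E} {c : ι → ℝ}
    (hA : ∀ j, ‖A j‖ = 1) {v p x : E} (hv : ‖v‖ = 1) (hp : p ∈ polyhedron A c)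
    (hx : x ∈ polyhedron A c) (hmax : IsMaxOn (⟪v, ·⟫) (polyhedron A c) p)
    (hxv : ⟪v, x⟫ = ⟪v, p⟫) (hxp : x ≠ p) : ∃ j, A j = v ∨ A j = -v := by
  set z : E := (1 / 2 : ℝ) • x + (1 / 2 : ℝ) • p
  have hz : z ∈ polyhedron A c :=
    convex_polyhedron A c hx hp (by norm_num) (by norm_num) (by norm_num)
  have hinner : ∀ w, ⟪w, z⟫ = (⟪w, x⟫ + ⟪w, p⟫) / 2 := fun w => by
    simp only [z, inner_add_right, real_inner_smul_right]; ring
  have hzmax : IsMaxOn (⟪v, ·⟫) (polyhedron A c) z :=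
    isMaxOn_iff.2 fun y hy => by rw [hinner, hxv]; linarith [isMaxOn_iff.1 hmax y hy]
  obtain ⟨j, hj⟩ := exists_inner_eq_of_isMaxOn (by simp [← norm_ne_zero_iff, hv]) hz hzmax
  -- the constraint `j` is tight at the midpoint, hence at both endpoints of the edge `[p, x]`
  have hjx : ⟪A j, x⟫ = c j := by linarith [hinner (A j), hx j, hp j]
  have hjp : ⟪A j, p⟫ = c j := by linarith [hinner (A j), hx j, hp j]
  refine ⟨j, eq_or_eq_neg_of_inner_eq_zero (hA j) hv (sub_ne_zero.2 hxp) ?_ ?_⟩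
  · rw [real_inner_comm, inner_sub_right, hjx, hjp, sub_self]
  · rw [real_inner_comm, inner_sub_right, hxv, sub_self]

end Planar

local notation "ℝ²" => EuclideanSpace ℝ (Fin 2)

instance : Fact (finrank ℝ ℝ² = 2) := ⟨finrank_euclideanSpace_fin⟩

section Width

variable {K L : Set ℝ²} {v : ℝ²}

lemma isBounded_image_inner (hK : Bornology.IsBounded K) : Bornology.IsBounded ((⟪v, ·⟫) '' K) :=
  (innerSL ℝ v).lipschitz.isBounded_image hK

lemma dirWidth_nonneg (hK : Bornology.IsBounded K) : 0 ≤ dirWidth v K :=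
  sub_nonneg.2 <| Real.sInf_le_sSup _ (isBounded_image_inner hK).bddBelow
    (isBounded_image_inner hK).bddAbove

lemma dirWidth_mono (hL : Bornology.IsBounded L) (h : K ⊆ L) : dirWidth v K ≤ dirWidth v L := by
  rcases K.eq_empty_or_nonempty with rfl | hK
  · simpa [dirWidth] using dirWidth_nonneg hL
  have hsup := csSup_le_csSup (isBounded_image_inner (v := v) hL).bddAbove (hK.image _)
    (image_mono h)
  have hinf := csInf_le_csInf (isBounded_image_inner (v := v) hL).bddBelow (hK.image _)
    (image_mono h)
  simp only [dirWidth]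
  linarith

lemma dirWidth_neg (v : ℝ²) (K : Set ℝ²) : dirWidth (-v) K = dirWidth v K := by
  have himage : (⟪-v, ·⟫) '' K = -((⟪v, ·⟫) '' K) := by
    simp only [inner_neg_left, ← image_neg_eq_neg, image_image]
  rw [dirWidth, dirWidth, himage, Real.sSup_neg, Real.sInf_neg]
  ring

lemma dirWidth_eq_inner_sub {p q : ℝ²} (hp : p ∈ K) (hq : q ∈ K)
    (hmax : IsMaxOn (⟪v, ·⟫) K p) (hmin : IsMinOn (⟪v, ·⟫) K q) :
    dirWidth v K = ⟪v, p - q⟫ := by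
  rw [dirWidth, inner_sub_right,
    IsGreatest.csSup_eq ⟨mem_image_of_mem _ hp, forall_mem_image.2 (isMaxOn_iff.1 hmax)⟩,
    IsLeast.csInf_eq ⟨mem_image_of_mem _ hq, forall_mem_image.2 (isMinOn_iff.1 hmin)⟩]

lemma continuous_dirWidth (hK : IsCompact K) : Continuous (dirWidth · K) :=
  (hK.continuous_sSup continuous_inner).sub (hK.continuous_sInf continuous_inner)

lemma image_inner_closedBall_zero (hv : ‖v‖ = 1) (t : ℝ) :
    (⟪v, ·⟫) '' closedBall 0 t = Icc (-t) t := by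
  ext s
  refine ⟨?_, fun hs => ⟨s • v, ?_, ?_⟩⟩
  · rintro ⟨x, hx, rfl⟩
    have := (abs_real_inner_le_norm v x).trans (by simpa [hv] using hx)
    exact abs_le.1 this
  · simpa [norm_smul, hv] using abs_le.2 hs
  · simp [real_inner_smul_right, hv]

lemma dirWidth_add_closedBall (hv : ‖v‖ = 1) (hK : Bornology.IsBounded K) (hne : K.Nonempty) {t : ℝ}
    (ht : 0 ≤ t) : dirWidth v (K + closedBall (0 : ℝ²) t) = dirWidth v K + 2 * t := by
  have himage : (⟪v, ·⟫) '' (K + closedBall (0 : ℝ²) t) = (⟪v, ·⟫) '' K + Icc (-t) t := by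
    rw [← image_inner_closedBall_zero hv]
    exact image_add (innerSL ℝ v)
  have hIcc : (Icc (-t) t).Nonempty := nonempty_Icc.2 (by linarith)
  rw [dirWidth, dirWidth, himage,
    csSup_add (hne.image _) (isBounded_image_inner hK).bddAbove hIcc bddAbove_Icc,
    csInf_add (hne.image _) (isBounded_image_inner hK).bddBelow hIcc bddBelow_Icc,
    csSup_Icc (by linarith), csInf_Icc (by linarith)]
  ring

lemma nonempty_dirWidths (K : Set ℝ²) :
    {w | ∃ v : ℝ², ‖v‖ = 1 ∧ w = dirWidth v K}.Nonempty :=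
  ⟨_, EuclideanSpace.single 0 1, by simp, rfl⟩

lemma bddBelow_dirWidths (hK : Bornology.IsBounded K) :
    BddBelow {w | ∃ v : ℝ², ‖v‖ = 1 ∧ w = dirWidth v K} :=
  ⟨0, by rintro _ ⟨w, -, rfl⟩; exact dirWidth_nonneg hK⟩

lemma setWidth_le_dirWidth (hK : Bornology.IsBounded K) (hv : ‖v‖ = 1) :
    setWidth K ≤ dirWidth v K :=
  csInf_le (bddBelow_dirWidths hK) ⟨v, hv, rfl⟩

lemma setWidth_mono (hL : Bornology.IsBounded L) (h : K ⊆ L) : setWidth K ≤ setWidth L :=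
  le_csInf (nonempty_dirWidths L) <| by
    rintro _ ⟨v, hv, rfl⟩
    exact (setWidth_le_dirWidth (hL.subset h) hv).trans (dirWidth_mono hL h)

lemma setWidth_eq_dirWidth_of_isMinOn (hv : v ∈ sphere 0 1)
    (hmin : IsMinOn (dirWidth · K) (sphere 0 1) v) : setWidth K = dirWidth v K :=
  IsLeast.csInf_eq ⟨⟨v, by simpa using hv, rfl⟩, by
    rintro _ ⟨w, hw, rfl⟩
    exact isMinOn_iff.1 hmin w (by simpa using hw)⟩

lemma setWidth_add_closedBall (hK : Bornology.IsBounded K) (hne : K.Nonempty) {t : ℝ}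
    (ht : 0 ≤ t) : setWidth (K + closedBall (0 : ℝ²) t) = setWidth K + 2 * t := by
  have hwidths : {w | ∃ v : ℝ², ‖v‖ = 1 ∧ w = dirWidth v (K + closedBall 0 t)} =
      {w | ∃ v : ℝ², ‖v‖ = 1 ∧ w = dirWidth v K} + {2 * t} := by
    ext w
    simp only [add_singleton, mem_image, mem_ofPred_eq]
    constructor
    · rintro ⟨v, hv, rfl⟩
      exact ⟨_, ⟨v, hv, rfl⟩, (dirWidth_add_closedBall hv hK hne ht).symm⟩
    · rintro ⟨_, ⟨v, hv, rfl⟩, rfl⟩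
      exact ⟨v, hv, (dirWidth_add_closedBall hv hK hne ht).symm⟩
  rw [setWidth, setWidth, hwidths, csInf_add (nonempty_dirWidths K) (bddBelow_dirWidths hK)
    (singleton_nonempty _) bddBelow_singleton, csInf_singleton]

end Width

section ParallelBodies

variable {P : Set ℝ²}

lemma innerParallel_subset (P : Set ℝ²) (t : ℝ) : innerParallel P t ⊆ P := sep_subset _ _

lemma antitone_innerParallel (P : Set ℝ²) : Antitone (innerParallel P) :=
  fun _ _ hst _ hx => ⟨hx.1, (closedBall_subset_closedBall hst).trans hx.2⟩

lemma innerParallel_nonempty_of_lt_inradius {t : ℝ} (ht : 0 ≤ t) (h : t < inradius P) :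
    (innerParallel P t).Nonempty := by
  have hradii : {r : ℝ | ∃ x : ℝ², closedBall x r ⊆ P}.Nonempty :=
    ⟨-1, 0, by simp⟩
  obtain ⟨r, ⟨x, hx⟩, htr⟩ := exists_lt_of_lt_csSup hradii h
  have hball : closedBall x t ⊆ P := (closedBall_subset_closedBall htr.le).trans hx
  exact ⟨x, hball (mem_closedBall_self ht), hball⟩

lemma rounded_eq_innerParallel_add_closedBall {t : ℝ} (ht : 0 ≤ t) :
    rounded P t = innerParallel P t + closedBall 0 t := by
  ext y
  constructor
  · rintro ⟨x, hball, hy⟩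
    refine Set.mem_add.2 ⟨x, ⟨hball (mem_closedBall_self ht), hball⟩, y - x, ?_, by abel⟩
    rwa [mem_closedBall_zero_iff, ← dist_eq_norm]
  · rintro ⟨x, hx, d, hd, rfl⟩
    exact ⟨x, hx.2, by simpa [dist_eq_norm] using hd⟩

lemma innerParallel_polyhedron {ι : Type*} {A : ι → ℝ²} {c : ι → ℝ} (hA : ∀ j, ‖A j‖ = 1)
    {t : ℝ} (ht : 0 ≤ t) : innerParallel (polyhedron A c) t = polyhedron A (fun j => c j - t) :=
  ext fun x => ⟨fun hx => (closedBall_subset_polyhedron_iff hA ht).1 hx.2,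
    fun hx => ⟨fun j => (hx j).trans (by linarith), (closedBall_subset_polyhedron_iff hA ht).2 hx⟩⟩

end ParallelBodies

theorem exists_dirWidth_eq_setWidth_polyhedron {ι : Type*} [Finite ι] {A : ι → ℝ²}
    {c : ι → ℝ} (hA : ∀ j, ‖A j‖ = 1) (hQ : IsCompact (polyhedron A c))
    (hne : (polyhedron A c).Nonempty) (hpos : 0 < setWidth (polyhedron A c)) :
    ∃ j, dirWidth (A j) (polyhedron A c) = setWidth (polyhedron A c) := by
  set Q := polyhedron A c
  obtain ⟨v, hv, hvmin⟩ := (isCompact_sphere (0 : ℝ²) 1).exists_isMinOn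
    (NormedSpace.sphere_nonempty.2 zero_le_one) (continuous_dirWidth hQ).continuousOn
  have hv1 : ‖v‖ = 1 := by simpa using hv
  rw [setWidth_eq_dirWidth_of_isMinOn hv hvmin] at hpos ⊢
  have hnormal : ∀ j, (A j = v ∨ A j = -v) → dirWidth (A j) Q = dirWidth v Q := by
    rintro j (h | h) <;> simp [h, dirWidth_neg]
  obtain ⟨p, hp, hpmax⟩ := hQ.exists_isMaxOn hne (f := (⟪v, ·⟫)) (by fun_prop)
  obtain ⟨q, hq, hqmin⟩ := hQ.exists_isMinOn hne (f := (⟪v, ·⟫)) (by fun_prop)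
  have hqmax : IsMaxOn (⟪-v, ·⟫) Q q := by simpa only [inner_neg_left] using hqmin.neg
  -- if a support set of `Q` in direction `±v` is not a vertex, it is an edge normal to `v`
  by_cases hpv : ∀ x ∈ Q, ⟪v, x⟫ = ⟪v, p⟫ → x = p
  swap
  · push Not at hpv
    obtain ⟨x, hx, hxv, hxp⟩ := hpv
    obtain ⟨j, hj⟩ := exists_eq_or_eq_neg_of_isMaxOn hA hv1 hp hx hpmax hxv hxp
    exact ⟨j, hnormal j hj⟩
  by_cases hqv : ∀ x ∈ Q, ⟪-v, x⟫ = ⟪-v, q⟫ → x = q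
  swap
  · push Not at hqv
    obtain ⟨x, hx, hxv, hxq⟩ := hqv
    obtain ⟨j, hj⟩ := exists_eq_or_eq_neg_of_isMaxOn hA (by rwa [norm_neg]) hq hx hqmax hxv hxq
    exact ⟨j, hnormal j (by rwa [neg_neg, or_comm] at hj)⟩
  -- otherwise the width is `⟪w, p - q⟫` for all directions `w` near `v`, which cannot be
  -- minimal at `v` on the circle
  exfalso
  have hloc : IsLocalMinOn (⟪·, p - q⟫) (sphere 0 1) v := by
    have hq' : ∀ᶠ w in 𝓝 v, IsMaxOn (⟪-w, ·⟫) Q q :=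
      (continuous_neg.tendsto v).eventually (eventually_isMaxOn_polyhedron hq hqmax hqv)
    filter_upwards [nhdsWithin_le_nhds ((eventually_isMaxOn_polyhedron hp hpmax hpv).and hq'),
      self_mem_nhdsWithin] with w ⟨hwp, hwq⟩ hw
    have hwq' : IsMinOn (⟪w, ·⟫) Q q := by simpa only [inner_neg_left, neg_neg] using hwq.neg
    rw [← dirWidth_eq_inner_sub hp hq hpmax hqmin, ← dirWidth_eq_inner_sub hp hq hwp hwq']
    exact isMinOn_iff.1 hvmin w hw
  rw [dirWidth_eq_inner_sub hp hq hpmax hqmin] at hpos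
  exact (inner_nonpos_of_isLocalMinOn_sphere hv1 hloc).not_gt hpos

theorem rho_eq_min_root_general {m : ℕ}
    (A : Fin m → EuclideanSpace ℝ (Fin 2)) (b : Fin m → ℝ)
    (hA : ∀ i, ‖A i‖ = 1)
    (hbdd : Bornology.IsBounded {x | ∀ i, ⟪A i, x⟫ ≤ b i})
    (n : ℕ) (hn : 2 ≤ n)
    (ρ : ℝ) (hρ₀ : 0 < ρ) (hρr : ρ < inradius {x | ∀ j, ⟪A j, x⟫ ≤ b j})
    (hρ : setWidth (rounded {x | ∀ j, ⟪A j, x⟫ ≤ b j} ρ) = 2 * n * ρ) :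
    IsLeast
      {t : ℝ | 0 < t ∧ t < inradius {x | ∀ j, ⟪A j, x⟫ ≤ b j} ∧
        ∃ i : Fin m,
          dirWidth (A i) (innerParallel {x | ∀ j, ⟪A j, x⟫ ≤ b j} t)
            - 2 * ((n : ℝ) - 1) * t = 0}
      ρ := by
  have hP : {x | ∀ j, ⟪A j, x⟫ ≤ b j} = polyhedron A b := rfl
  rw [hP] at hbdd hρr hρ ⊢
  have hbddIP : ∀ t, Bornology.IsBounded (innerParallel (polyhedron A b) t) :=
    fun t => hbdd.subset (innerParallel_subset _ t)
  have hne := innerParallel_nonempty_of_lt_inradius hρ₀.le hρr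
  have hwidth : setWidth (innerParallel (polyhedron A b) ρ) = 2 * (n - 1) * ρ := by
    have := setWidth_add_closedBall (hbddIP ρ) hne hρ₀.le
    rw [← rounded_eq_innerParallel_add_closedBall hρ₀.le, hρ] at this
    linarith
  have hn' : (2 : ℝ) ≤ n := by exact_mod_cast hn
  obtain ⟨i, hi⟩ : ∃ i, dirWidth (A i) (innerParallel (polyhedron A b) ρ) =
      setWidth (innerParallel (polyhedron A b) ρ) := by
    have hbddQ := hbddIP ρ
    rw [innerParallel_polyhedron hA hρ₀.le] at hne hbddQ hwidth ⊢
    exact exists_dirWidth_eq_setWidth_polyhedron hA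
      (isCompact_of_isClosed_isBounded (isClosed_polyhedron _ _) hbddQ) hne
      (by rw [hwidth]; nlinarith)
  refine ⟨⟨hρ₀, hρr, i, by rw [hi, hwidth]; ring⟩, ?_⟩
  rintro t ⟨ht, -, j, hj⟩
  by_contra! htρ
  have := (setWidth_mono (hbddIP t) (antitone_innerParallel _ htρ.le)).trans
    (setWidth_le_dirWidth (hbddIP t) (hA j))
  nlinarith

/-- For a convex polygon `P = {x : Ax ≤ b} ⊆ ℝ²` with nonempty interior, unit-norm rows and
every row defining an edge of `P`, with `n ≥ 2`, `r = I(P)` and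
`f_i(t) = width_{A_i}(interior_t P) − 2(n−1)t`, the unique `ρ ∈ (0,r)` with
`width (P^ρ) = 2nρ` is the minimum of `{t ∈ (0,r) : f_i(t) = 0 for some i}`. -/
theorem rho_eq_min_root {m : ℕ}
    (A : Fin m → EuclideanSpace ℝ (Fin 2)) (b : Fin m → ℝ)
    (hA : ∀ i, ‖A i‖ = 1)
    (hbdd : Bornology.IsBounded {x | ∀ i, ⟪A i, x⟫ ≤ b i})
    (hint : (interior {x | ∀ i, ⟪A i, x⟫ ≤ b i}).Nonempty)
    (hedge : ∀ i, Module.finrank ℝ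
      (vectorSpan ℝ {x ∈ {x | ∀ j, ⟪A j, x⟫ ≤ b j} | ⟪A i, x⟫ = b i}) = 1)
    (n : ℕ) (hn : 2 ≤ n)
    (ρ : ℝ) (hρ₀ : 0 < ρ) (hρr : ρ < inradius {x | ∀ j, ⟪A j, x⟫ ≤ b j})
    (hρ : setWidth (rounded {x | ∀ j, ⟪A j, x⟫ ≤ b j} ρ) = 2 * n * ρ) :
    IsLeast
      {t : ℝ | 0 < t ∧ t < inradius {x | ∀ j, ⟪A j, x⟫ ≤ b j} ∧
        ∃ i : Fin m,
          dirWidth (A i) (innerParallel {x | ∀ j, ⟪A j, x⟫ ≤ b j} t)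
            - 2 * ((n : ℝ) - 1) * t = 0}
      ρ :=
  rho_eq_min_root_general A b hA hbdd n hn ρ hρ₀ hρr hρ
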